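/- arXiv:math/0703899 — 2 statements merged into one kernel-verified Lean document; each statement's English description precedes it below -/
import Mathlib

section
/- Foster's theorem: Let G be a finite connected simple graph with n vertices and e edges (e ≥ 1), every edge having resistance 1. Then the sum over all edges {u,v} of the effective resistance R(u,v) equals n − 1; equivalently, the average over the edges of G of the effective resistance across the edge is (n−1)/e. -/
/-!
Let `J = 11ᵀ/n` be the projection onto the constants and `M = (L + J)⁻¹`, where `L` is the
Laplacian; for connected `G` one has `L M = I - J`. For `p ≠ q` the potential
`φ = M (e_p - e_q)` then solves `L φ = e_p - e_q`, so its gradient is a unit flow from `p` to `q`,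
and by Thomson's principle it has least energy, giving `R(p, q) = (e_p - e_q)ᵀ M (e_p - e_q)`.
Summing this quadratic form over the edges gives `tr (L M) = tr (I - J) = n - 1`.
-/

variable {V : Type*}

/-- A *flow* on a graph: an antisymmetric function on ordered pairs of vertices
that vanishes on non-adjacent pairs. -/
def IsFlow (G : SimpleGraph V) (θ : V → V → ℝ) : Prop :=
  (∀ u v, θ u v = -θ v u) ∧ ∀ u v, ¬G.Adj u v → θ u v = 0

/-- The divergence (source strength) of a flow at a vertex. -/
noncomputable def divg (G : SimpleGraph V) [G.LocallyFinite] (θ : V → V → ℝ) (v : V) : ℝ :=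
  ∑ u ∈ G.neighborFinset v, θ v u

open Classical in
/-- The source distribution with a unit source at `p` and a unit sink at `q`. -/
noncomputable def pointSource (p q v : V) : ℝ :=
  if v = p then 1 else if v = q then -1 else 0

open Classical in
/-- The energy `(1/2) ∑_{(u,v) adjacent} θ(u,v)²` of a flow in a finite graph with unit
resistances. -/
noncomputable def energyFin (G : SimpleGraph V) [Fintype V] (θ : V → V → ℝ) : ℝ :=
  2⁻¹ * ∑ x : V × V, if G.Adj x.1 x.2 then θ x.1 x.2 ^ 2 else 0

open Classical in
/-- The effective resistance between `p` and `q` in a finite graph with unit resistances: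
the minimum of the energy over all unit flows from `p` to `q`. -/
noncomputable def effRes (G : SimpleGraph V) [Fintype V] (p q : V) : ℝ :=
  sInf {x | ∃ θ, IsFlow G θ ∧ divg G θ = pointSource p q ∧ x = energyFin G θ}

open Classical

lemma resSet_swap (G : SimpleGraph V) [Fintype V] {p q : V} (hpq : p ≠ q) {x : ℝ}
    (h : x ∈ {x | ∃ θ, IsFlow G θ ∧ divg G θ = pointSource p q ∧ x = energyFin G θ}) :
    x ∈ {x | ∃ θ, IsFlow G θ ∧ divg G θ = pointSource q p ∧ x = energyFin G θ} := by
  obtain ⟨θ, hθ, hd, rfl⟩ := h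
  refine ⟨fun a b => -θ a b, ⟨fun a b => ?_, fun a b hab => ?_⟩, ?_, ?_⟩
  · show -θ a b = -(-θ b a)
    rw [← hθ.1 a b]
  · show -θ a b = 0
    rw [hθ.2 a b hab, neg_zero]
  · funext w
    have hneg : divg G (fun a b => -θ a b) w = -divg G θ w := by
      simp [divg]
    rw [hneg]
    have := congrFun hd w
    rw [this]
    unfold pointSource
    rcases eq_or_ne w p with rfl | h1 <;> rcases eq_or_ne w q with rfl | h2 <;>
      simp_all
  · unfold energyFin
    congr 1
    refine Finset.sum_congr rfl fun x _ => ?_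
    simp [neg_sq]

lemma effRes_symm (G : SimpleGraph V) [Fintype V] (p q : V) :
    effRes G p q = effRes G q p := by
  rcases eq_or_ne p q with rfl | hpq
  · rfl
  unfold effRes
  congr 1
  ext x
  exact ⟨fun h => resSet_swap G hpq h, fun h => resSet_swap G hpq.symm h⟩

/-- The effective resistance as a function of an unordered edge. -/
noncomputable def effResSym (G : SimpleGraph V) [Fintype V] : Sym2 V → ℝ :=
  Sym2.lift ⟨fun u v => effRes G u v, fun u v => effRes_symm G u v⟩

open Finset Matrix

section Flows

variable (G : SimpleGraph V)

noncomputable def gradFlow (φ : V → ℝ) (u v : V) : ℝ :=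
  if G.Adj u v then φ u - φ v else 0

lemma isFlow_gradFlow (φ : V → ℝ) : IsFlow G (gradFlow G φ) := by
  refine ⟨fun u v => ?_, fun u v h => if_neg h⟩
  simp only [gradFlow, G.adj_comm v u]
  split_ifs <;> ring

variable [Fintype V]

lemma divg_eq_sum_ite (θ : V → V → ℝ) (u : V) :
    divg G θ u = ∑ v, if G.Adj u v then θ u v else 0 := by
  rw [divg, SimpleGraph.neighborFinset_eq_filter, sum_filter]

lemma sum_adj_swap (f : V → V → ℝ) :
    ∑ x : V × V, (if G.Adj x.1 x.2 then f x.1 x.2 else 0) =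
      ∑ x : V × V, (if G.Adj x.1 x.2 then f x.2 x.1 else 0) :=
  Fintype.sum_equiv (Equiv.prodComm V V) _ _ fun x => by simp [G.adj_comm]

lemma sum_adj_sub_mul_eq_two_mul_sum_mul_divg (φ : V → ℝ) {η : V → V → ℝ}
    (hη : ∀ u v, η u v = -η v u) :
    ∑ x : V × V, (if G.Adj x.1 x.2 then (φ x.1 - φ x.2) * η x.1 x.2 else 0) =
      2 * ∑ u, φ u * divg G η u := by
  have hsplit : ∀ x : V × V, (if G.Adj x.1 x.2 then (φ x.1 - φ x.2) * η x.1 x.2 else 0) =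
      (if G.Adj x.1 x.2 then φ x.1 * η x.1 x.2 else 0) +
        (if G.Adj x.1 x.2 then φ x.2 * η x.2 x.1 else 0) := by
    intro x
    split_ifs
    · rw [hη x.2 x.1]; ring
    · ring
  rw [sum_congr rfl fun x _ => hsplit x, sum_add_distrib,
    ← sum_adj_swap G fun u v => φ u * η u v, ← two_mul, Fintype.sum_prod_type]
  simp_rw [divg_eq_sum_ite, mul_sum, mul_ite, mul_zero]

lemma divg_gradFlow (φ : V → ℝ) : divg G (gradFlow G φ) = G.lapMatrix ℝ *ᵥ φ := by
  funext u
  simp only [divg, gradFlow]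
  rw [SimpleGraph.lapMatrix_mulVec_apply,
    sum_congr rfl fun v hv => if_pos ((G.mem_neighborFinset u v).mp hv),
    sum_sub_distrib, sum_const, G.card_neighborFinset_eq_degree, nsmul_eq_mul]

lemma energyFin_gradFlow (φ : V → ℝ) :
    energyFin G (gradFlow G φ) = φ ⬝ᵥ (G.lapMatrix ℝ *ᵥ φ) := by
  have h := sum_adj_sub_mul_eq_two_mul_sum_mul_divg G φ (isFlow_gradFlow G φ).1
  rw [divg_gradFlow] at h
  have hsq : ∀ x : V × V, (if G.Adj x.1 x.2 then gradFlow G φ x.1 x.2 ^ 2 else 0) =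
      (if G.Adj x.1 x.2 then (φ x.1 - φ x.2) * gradFlow G φ x.1 x.2 else 0) := by
    intro x
    split_ifs with hx
    · rw [sq, gradFlow, if_pos hx]
    · rfl
  rw [energyFin, sum_congr rfl fun x _ => hsq x, h, dotProduct]
  ring

/-- Thomson's principle: the difference of the two flows is divergence-free, hence orthogonal to
every gradient. -/
lemma energyFin_gradFlow_le (φ : V → ℝ) {θ : V → V → ℝ} (hθ : IsFlow G θ)
    (hdiv : divg G θ = divg G (gradFlow G φ)) :
    energyFin G (gradFlow G φ) ≤ energyFin G θ := by
  set η : V → V → ℝ := fun u v => θ u v - gradFlow G φ u v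
  have hη : ∀ u v, η u v = -η v u := fun u v => by
    simp only [η, hθ.1 u v, (isFlow_gradFlow G φ).1 u v]; ring
  have hdivη : ∀ u, divg G η u = 0 := fun u => by
    simp only [η, divg, sum_sub_distrib]
    exact sub_eq_zero.mpr (congrFun hdiv u)
  have horth : ∑ x : V × V, (if G.Adj x.1 x.2 then (φ x.1 - φ x.2) * η x.1 x.2 else 0) = 0 := by
    simp [sum_adj_sub_mul_eq_two_mul_sum_mul_divg G φ hη, hdivη]
  have hpoint : ∀ x : V × V, (if G.Adj x.1 x.2 then gradFlow G φ x.1 x.2 ^ 2 else 0) +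
      2 * (if G.Adj x.1 x.2 then (φ x.1 - φ x.2) * η x.1 x.2 else 0) ≤
        (if G.Adj x.1 x.2 then θ x.1 x.2 ^ 2 else 0) := by
    intro x
    split_ifs with hx
    · simp only [η, gradFlow, if_pos hx]
      nlinarith [sq_nonneg (θ x.1 x.2 - (φ x.1 - φ x.2))]
    · simp
  have hsum := sum_le_sum fun x (_ : x ∈ univ) => hpoint x
  rw [sum_add_distrib, ← mul_sum, horth] at hsum
  unfold energyFin
  linarith

lemma dotProduct_pointSource {p q : V} (hpq : p ≠ q) (g : V → ℝ) :
    g ⬝ᵥ pointSource p q = g p - g q := by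
  have hsplit : ∀ v, g v * pointSource p q v =
      (if v = p then g v else 0) - (if v = q then g v else 0) := fun v => by
    unfold pointSource
    split_ifs <;> simp_all
  simp [dotProduct, hsplit, sum_sub_distrib]

lemma effRes_eq_of_lapMatrix_mulVec_eq {p q : V} (hpq : p ≠ q) {φ : V → ℝ}
    (hφ : G.lapMatrix ℝ *ᵥ φ = pointSource p q) :
    effRes G p q = φ p - φ q := by
  have hdiv : divg G (gradFlow G φ) = pointSource p q := by rw [divg_gradFlow, hφ]
  have henergy : energyFin G (gradFlow G φ) = φ p - φ q := by
    rw [energyFin_gradFlow, hφ, dotProduct_pointSource hpq]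
  rw [effRes, ← henergy]
  refine IsLeast.csInf_eq ⟨⟨gradFlow G φ, isFlow_gradFlow G φ, hdiv, rfl⟩, ?_⟩
  rintro _ ⟨θ, hθ, hθdiv, rfl⟩
  exact energyFin_gradFlow_le G φ hθ (hθdiv.trans hdiv.symm)

end Flows

section Laplacian

variable [Fintype V]

noncomputable def avgMatrix (V : Type*) [Fintype V] : Matrix V V ℝ :=
  of fun _ _ => (Fintype.card V : ℝ)⁻¹

lemma avgMatrix_mulVec (z : V → ℝ) :
    avgMatrix V *ᵥ z = fun _ => (Fintype.card V : ℝ)⁻¹ * ∑ j, z j := by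
  funext i
  simp [avgMatrix, mulVec, dotProduct, mul_sum]

lemma avgMatrix_mul_self [Nonempty V] : avgMatrix V * avgMatrix V = avgMatrix V := by
  ext i j
  simp [avgMatrix, mul_apply]

variable (G : SimpleGraph V)

lemma avgMatrix_mul_lapMatrix : avgMatrix V * G.lapMatrix ℝ = 0 := by
  ext i j
  have hcol : ∑ k, G.lapMatrix ℝ k j = 0 := by
    simpa [mulVec, dotProduct, (G.isSymm_lapMatrix ℝ).apply]
      using congrFun (G.lapMatrix_mulVec_const_eq_zero (R := ℝ)) j
  simp [avgMatrix, mul_apply, ← mul_sum, hcol]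

lemma avgMatrix_mul_lapMatrix_add_avgMatrix [Nonempty V] :
    avgMatrix V * (G.lapMatrix ℝ + avgMatrix V) = avgMatrix V := by
  rw [Matrix.mul_add, avgMatrix_mul_lapMatrix, avgMatrix_mul_self, zero_add]

lemma eq_zero_of_lapMatrix_mulVec_eq_zero (hconn : G.Connected) {z : V → ℝ}
    (hL : G.lapMatrix ℝ *ᵥ z = 0) (hsum : ∑ j, z j = 0) : z = 0 := by
  have hconst : ∀ i j, z i = z j := fun i j =>
    G.lapMatrix_mulVec_eq_zero_iff_forall_reachable.mp hL i j (hconn i j)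
  funext i
  have hn : (Fintype.card V : ℝ) ≠ 0 := by
    have := hconn.nonempty
    exact_mod_cast Fintype.card_ne_zero
  rw [sum_congr rfl fun j _ => hconst j i, sum_const, card_univ, nsmul_eq_mul] at hsum
  simpa [hn] using hsum

/-- `avgMatrix V` is the orthogonal projection onto the constants, which span the kernel of the
Laplacian of a connected graph. -/
lemma isUnit_lapMatrix_add_avgMatrix (hconn : G.Connected) :
    IsUnit (G.lapMatrix ℝ + avgMatrix V) := by
  have := hconn.nonempty
  rw [← mulVec_injective_iff_isUnit]
  intro x y hxy
  have hz : (G.lapMatrix ℝ + avgMatrix V) *ᵥ (x - y) = 0 := by rw [mulVec_sub, hxy, sub_self]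
  have hJz : avgMatrix V *ᵥ (x - y) = 0 := by
    rw [← avgMatrix_mul_lapMatrix_add_avgMatrix G, ← mulVec_mulVec, hz, mulVec_zero]
  have hLz : G.lapMatrix ℝ *ᵥ (x - y) = 0 := by rw [← hz, add_mulVec, hJz, add_zero]
  have hsum : ∑ j, (x - y) j = 0 := by
    simpa [avgMatrix_mulVec, Fintype.card_ne_zero] using congrFun hJz (Classical.arbitrary V)
  exact sub_eq_zero.mp (eq_zero_of_lapMatrix_mulVec_eq_zero G hconn hLz hsum)

noncomputable def lapInverse : Matrix V V ℝ :=
  (G.lapMatrix ℝ + avgMatrix V)⁻¹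

lemma lapMatrix_mul_lapInverse (hconn : G.Connected) :
    G.lapMatrix ℝ * lapInverse G = 1 - avgMatrix V := by
  have := hconn.nonempty
  have hinv : (G.lapMatrix ℝ + avgMatrix V) * lapInverse G = 1 :=
    mul_nonsing_inv _ ((isUnit_iff_isUnit_det _).mp (isUnit_lapMatrix_add_avgMatrix G hconn))
  have hJ : avgMatrix V * lapInverse G = avgMatrix V := by
    calc avgMatrix V * lapInverse G
        = avgMatrix V * (G.lapMatrix ℝ + avgMatrix V) * lapInverse G := by
          rw [avgMatrix_mul_lapMatrix_add_avgMatrix]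
      _ = avgMatrix V := by rw [Matrix.mul_assoc, hinv, Matrix.mul_one]
  calc G.lapMatrix ℝ * lapInverse G
      = (G.lapMatrix ℝ + avgMatrix V - avgMatrix V) * lapInverse G := by
        rw [add_sub_cancel_right]
    _ = 1 - avgMatrix V := by rw [Matrix.sub_mul, hinv, hJ]

lemma trace_lapMatrix_mul_lapInverse (hconn : G.Connected) :
    trace (G.lapMatrix ℝ * lapInverse G) = Fintype.card V - 1 := by
  have := hconn.nonempty
  simp [lapMatrix_mul_lapInverse G hconn, avgMatrix, trace, Fintype.card_ne_zero]

lemma effRes_eq_lapInverse (hconn : G.Connected) {p q : V} (hpq : p ≠ q) :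
    effRes G p q =
      lapInverse G p p + lapInverse G q q - lapInverse G p q - lapInverse G q p := by
  have hsum : ∑ v, pointSource p q v = 0 := by
    simpa [dotProduct] using dotProduct_pointSource hpq (fun _ => (1 : ℝ))
  have hφ : G.lapMatrix ℝ *ᵥ (lapInverse G *ᵥ pointSource p q) = pointSource p q := by
    rw [mulVec_mulVec, lapMatrix_mul_lapInverse G hconn, sub_mulVec, one_mulVec,
      avgMatrix_mulVec, hsum, mul_zero]
    exact sub_zero _
  rw [effRes_eq_of_lapMatrix_mulVec_eq G hpq hφ, mulVec, mulVec,
    dotProduct_pointSource hpq, dotProduct_pointSource hpq]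
  ring

end Laplacian

section EdgeSums

variable [Fintype V] (G : SimpleGraph V)

lemma sum_adj_eq_two_mul_trace_lapMatrix_mul (A : Matrix V V ℝ) :
    ∑ x : V × V, (if G.Adj x.1 x.2 then
        A x.1 x.1 + A x.2 x.2 - A x.1 x.2 - A x.2 x.1 else 0) =
      2 * trace (G.lapMatrix ℝ * A) := by
  have hdiag : ∀ u, (G.lapMatrix ℝ * A) u u = ∑ v, if G.Adj u v then A u u - A v u else 0 := by
    intro u
    rw [mul_apply, ← dotProduct, ← mulVec, ← divg_gradFlow, divg_eq_sum_ite]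
    exact sum_congr rfl fun v _ => by simp only [gradFlow]; split_ifs <;> rfl
  calc ∑ x : V × V, (if G.Adj x.1 x.2 then
          A x.1 x.1 + A x.2 x.2 - A x.1 x.2 - A x.2 x.1 else 0)
      = ∑ x : V × V, (if G.Adj x.1 x.2 then A x.1 x.1 - A x.2 x.1 else 0) +
          ∑ x : V × V, (if G.Adj x.1 x.2 then A x.2 x.2 - A x.1 x.2 else 0) := by
        rw [← sum_add_distrib]
        exact sum_congr rfl fun x _ => by split_ifs <;> ring
    _ = 2 * ∑ x : V × V, (if G.Adj x.1 x.2 then A x.1 x.1 - A x.2 x.1 else 0) := by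
        rw [sum_adj_swap G fun u v => A v v - A u v, two_mul]
    _ = 2 * trace (G.lapMatrix ℝ * A) := by
        rw [Fintype.sum_prod_type, trace]
        simp only [diag_apply, hdiag]

lemma sum_adj_eq_two_mul_sum_edgeFinset (f : Sym2 V → ℝ) :
    ∑ x : V × V, (if G.Adj x.1 x.2 then f s(x.1, x.2) else 0) =
      2 * ∑ e ∈ G.edgeFinset, f e := by
  have hdart : ∑ x : V × V, (if G.Adj x.1 x.2 then f s(x.1, x.2) else 0) =
      ∑ d : G.Dart, f d.edge := by
    rw [← sum_filter]
    exact sum_bij' (fun x hx => ⟨x, (mem_filter.mp hx).2⟩) (fun d _ => d.toProd)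
      (by simp) (by simp [SimpleGraph.Dart.adj]) (by simp) (by simp)
      (by simp [SimpleGraph.Dart.edge])
  rw [hdart, ← sum_fiberwise_of_maps_to (t := G.edgeFinset)
    (fun d _ => SimpleGraph.mem_edgeFinset.mpr d.edge_mem), mul_sum]
  refine sum_congr rfl fun e he => ?_
  rw [sum_congr rfl fun d hd => congrArg f (mem_filter.mp hd).2, sum_const,
    G.dart_edge_fiber_card e (SimpleGraph.mem_edgeFinset.mp he), nsmul_eq_mul, Nat.cast_ofNat]

end EdgeSums

open Classical in
theorem foster_theorem_general (G : SimpleGraph V) [Fintype V]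
    (hconn : G.Connected) :
    ∑ e ∈ G.edgeFinset, effResSym G e = (Fintype.card V : ℝ) - 1 ∧
      (∑ e ∈ G.edgeFinset, effResSym G e) / (G.edgeFinset.card : ℝ) =
        ((Fintype.card V : ℝ) - 1) / (G.edgeFinset.card : ℝ) := by
  have hedge : ∀ x : V × V, (if G.Adj x.1 x.2 then effResSym G s(x.1, x.2) else 0) =
      (if G.Adj x.1 x.2 then lapInverse G x.1 x.1 + lapInverse G x.2 x.2 -
        lapInverse G x.1 x.2 - lapInverse G x.2 x.1 else 0) := fun x => by
    split_ifs with hx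
    exacts [effRes_eq_lapInverse G hconn hx.ne, rfl]
  have hsum : ∑ e ∈ G.edgeFinset, effResSym G e = Fintype.card V - 1 := by
    have h := sum_adj_eq_two_mul_sum_edgeFinset G (effResSym G)
    rw [sum_congr rfl fun x _ => hedge x, sum_adj_eq_two_mul_trace_lapMatrix_mul,
      trace_lapMatrix_mul_lapInverse G hconn] at h
    linarith
  exact ⟨hsum, by rw [hsum]⟩

open Classical in
/-- **Foster's theorem**: in a finite connected graph with `n` vertices and `e ≥ 1` edges,
all of unit resistance, the sum over the edges of the effective resistance across the edge
is `n - 1`; equivalently, the average of the resistances across the edges is `(n-1)/e`. -/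
theorem foster_theorem (G : SimpleGraph V) [Fintype V]
    (hconn : G.Connected) (he : 1 ≤ G.edgeFinset.card) :
    ∑ e ∈ G.edgeFinset, effResSym G e = (Fintype.card V : ℝ) - 1 ∧
      (∑ e ∈ G.edgeFinset, effResSym G e) / (G.edgeFinset.card : ℝ) =
        ((Fintype.card V : ℝ) - 1) / (G.edgeFinset.card : ℝ) :=
  foster_theorem_general G hconn
end

section
/- Kirchhoff's rule: Let G be a finite connected simple graph with every edge having resistance 1, and let {u,v} be an edge of G. Then the effective resistance R(u,v) equals the number of spanning trees of G containing the edge {u,v} divided by the total number of spanning trees of G; that is, R(u,v) is the probability that a uniformly random spanning tree of G contains the edge {u,v}. -/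
variable {V : Type*}

/-!
Average, over the spanning trees `T` of `G`, the unit flow that runs along the path from `u` to
`v` in `T`; call the result `i`. Deleting an edge `xy` from a tree whose `u`–`v` path crosses it
from `x` to `y` is a bijection onto the spanning forests with two components, `x` and `u` in one and
`y` and `v` in the other. Hence `i x y = ψ x - ψ y` on every edge, where `ψ w` counts the spanning
forests with two components separating `u` from `v` in which `w` lies on the side of `u`, divided
by the number of spanning trees. A unit flow that is a potential difference minimises the energy
(Thomson's principle), and its energy is `ψ u - ψ v = i u v`, the proportion of spanning trees
containing the edge `uv`.
-/

open Finset SimpleGraph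

lemma Finset.cast_card_sdiff_sub_cast_card_sdiff {α R : Type*} [DecidableEq α]
    [AddCommGroupWithOne R] (s t : Finset α) : (#(s \ t) : R) - #(t \ s) = #s - #t := by
  rw [← card_sdiff_add_card_inter s t, ← card_sdiff_add_card_inter t s, inter_comm]
  push_cast
  abel

section Flows

variable {G : SimpleGraph V}

def flowSubmodule (G : SimpleGraph V) : Submodule ℝ (V → V → ℝ) where
  carrier := {θ | IsFlow G θ}
  add_mem' {θ η} hθ hη := ⟨fun u v => by simp [hθ.1 u v, hη.1 u v, add_comm],
    fun u v huv => by simp [hθ.2 u v huv, hη.2 u v huv]⟩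
  zero_mem' := ⟨fun _ _ => by simp, fun _ _ _ => rfl⟩
  smul_mem' c θ hθ := ⟨fun u v => by simp [hθ.1 u v], fun u v huv => by simp [hθ.2 u v huv]⟩

variable [G.LocallyFinite]

lemma divg_sub (θ η : V → V → ℝ) : divg G (θ - η) = divg G θ - divg G η := by
  ext v; simp [divg, sum_sub_distrib]

lemma divg_smul (c : ℝ) (θ : V → V → ℝ) : divg G (c • θ) = c • divg G θ := by
  ext v; simp [divg, mul_sum]

lemma divg_sum {ι : Type*} (s : Finset ι) (θ : ι → V → V → ℝ) :
    divg G (∑ i ∈ s, θ i) = ∑ i ∈ s, divg G (θ i) := by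
  ext v; simp only [divg, Finset.sum_apply]; exact sum_comm

lemma pointSource_eq_single_sub_single [DecidableEq V] {p q : V} (hpq : p ≠ q) :
    pointSource p q = Pi.single p (1 : ℝ) - Pi.single q 1 := by
  ext x
  simp only [pointSource, Pi.sub_apply, Pi.single_apply]
  split_ifs <;> simp_all

end Flows

section Energy

variable [Fintype V] {G : SimpleGraph V} [G.LocallyFinite]

noncomputable def edgeInner (G : SimpleGraph V) [G.LocallyFinite] (θ η : V → V → ℝ) : ℝ :=
  ∑ x, ∑ y ∈ G.neighborFinset x, θ x y * η x y

lemma energyFin_eq_edgeInner (θ : V → V → ℝ) : energyFin G θ = 2⁻¹ * edgeInner G θ θ := by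
  classical
  rw [energyFin, edgeInner, Fintype.sum_prod_type]
  congr 1
  refine sum_congr rfl fun x _ => ?_
  rw [← sum_filter]
  exact sum_congr (by ext; simp) fun y _ => sq _

lemma edgeInner_self_nonneg (θ : V → V → ℝ) : 0 ≤ edgeInner G θ θ :=
  sum_nonneg fun _ _ => sum_nonneg fun _ _ => mul_self_nonneg _

lemma energyFin_add (θ η : V → V → ℝ) :
    energyFin G (θ + η) = energyFin G θ + energyFin G η + edgeInner G θ η := by
  simp only [energyFin_eq_edgeInner, edgeInner, Pi.add_apply, add_mul, mul_add, sum_add_distrib,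
    mul_comm (η _ _) (θ _ _)]
  ring

lemma sum_sum_neighborFinset_comm (f : V → V → ℝ) :
    ∑ x, ∑ y ∈ G.neighborFinset x, f x y = ∑ x, ∑ y ∈ G.neighborFinset x, f y x :=
  sum_comm' fun x y => by simp [mem_neighborFinset, G.adj_comm]

lemma edgeInner_potential_left {c : V → V → ℝ} (hc : ∀ x y, c x y = -c y x) (φ : V → ℝ) :
    edgeInner G (fun x y => φ x - φ y) c = 2 * ∑ x, φ x * divg G c x := by
  have hswap : ∑ x, ∑ y ∈ G.neighborFinset x, φ y * c x y
      = -∑ x, ∑ y ∈ G.neighborFinset x, φ x * c x y := by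
    rw [sum_sum_neighborFinset_comm]
    simp only [← sum_neg_distrib, ← mul_neg, ← hc]
  have hdivg : ∑ x, φ x * divg G c x = ∑ x, ∑ y ∈ G.neighborFinset x, φ x * c x y := by
    simp only [divg, mul_sum]
  rw [edgeInner, hdivg]
  simp only [sub_mul, sum_sub_distrib, hswap]
  ring

lemma edgeInner_eq_of_potential {i : V → V → ℝ} {ψ : V → ℝ}
    (hψ : ∀ x y, G.Adj x y → i x y = ψ x - ψ y) {c : V → V → ℝ} (hc : ∀ x y, c x y = -c y x) :
    edgeInner G i c = 2 * ∑ x, ψ x * divg G c x := by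
  rw [← edgeInner_potential_left hc]
  refine sum_congr rfl fun x _ => sum_congr rfl fun y hy => ?_
  rw [hψ x y ((mem_neighborFinset ..).1 hy)]

/-- `effRes` is defined with a classically chosen `LocallyFinite` instance; any other will do. -/
lemma effRes_eq_sInf (p q : V) :
    effRes G p q =
      sInf {x | ∃ θ, IsFlow G θ ∧ divg G θ = pointSource p q ∧ x = energyFin G θ} := by
  rw [effRes]
  congr!

theorem effRes_eq_of_potential {p q : V} (hpq : p ≠ q) {i : V → V → ℝ} {ψ : V → ℝ}
    (hi : IsFlow G i) (hdiv : divg G i = pointSource p q)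
    (hψ : ∀ x y, G.Adj x y → i x y = ψ x - ψ y) : effRes G p q = ψ p - ψ q := by
  classical
  have hleast : IsLeast {x | ∃ θ, IsFlow G θ ∧ divg G θ = pointSource p q ∧ x = energyFin G θ}
      (energyFin G i) := by
    refine ⟨⟨i, hi, hdiv, rfl⟩, ?_⟩
    rintro _ ⟨θ, hθ, hθdiv, rfl⟩
    have hantisymm (x y : V) : (θ - i) x y = -(θ - i) y x := by
      simp only [Pi.sub_apply, hθ.1 x y, hi.1 x y]
      ring
    have horth : edgeInner G i (θ - i) = 0 := by
      rw [edgeInner_eq_of_potential hψ hantisymm, divg_sub, hθdiv, hdiv, sub_self]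
      simp
    calc energyFin G i
        ≤ energyFin G i + energyFin G (θ - i) + edgeInner G i (θ - i) := by
          rw [horth, energyFin_eq_edgeInner (θ - i)]
          linarith [edgeInner_self_nonneg (G := G) (θ - i)]
      _ = energyFin G θ := by rw [← energyFin_add, add_sub_cancel]
  rw [effRes_eq_sInf, hleast.csInf_eq, energyFin_eq_edgeInner, edgeInner_eq_of_potential hψ hi.1,
    hdiv, pointSource_eq_single_sub_single hpq]
  simp [mul_sub, sum_sub_distrib, Pi.single_apply]

end Energy

section WalkFlow

variable {G H : SimpleGraph V} {a b c : V}

open Classical in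
noncomputable def walkFlow (p : H.Walk a b) : V → V → ℝ := fun x y =>
  ((p.darts.map Dart.toProd).count (x, y) : ℝ) - (p.darts.map Dart.toProd).count (y, x)

lemma walkFlow_cons [DecidableEq V] (h : H.Adj a c) (p : H.Walk c b) (x y : V) :
    walkFlow (Walk.cons h p) x y = walkFlow p x y +
      ((if a = x ∧ c = y then 1 else 0) - (if a = y ∧ c = x then 1 else 0)) := by
  simp only [walkFlow, Walk.darts_cons, List.map_cons, List.count_cons, beq_iff_eq, Prod.mk.injEq]
  push_cast
  ring

lemma walkFlow_antisymm (p : H.Walk a b) (x y : V) : walkFlow p x y = -walkFlow p y x := by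
  simp [walkFlow]

lemma walkFlow_eq_zero_of_not_adj (p : H.Walk a b) {x y : V} (h : ¬H.Adj x y) :
    walkFlow p x y = 0 := by
  classical
  have hcount {x y : V} (hxy : ¬H.Adj x y) : (p.darts.map Dart.toProd).count (x, y) = 0 := by
    refine List.count_eq_zero.2 ?_
    rw [List.mem_map]
    rintro ⟨⟨⟨x', y'⟩, hadj⟩, -, hd⟩
    obtain ⟨rfl, rfl⟩ := Prod.ext_iff.1 hd
    exact hxy hadj
  simp only [walkFlow]
  rw [hcount h, hcount fun h' => h h'.symm]
  simp

lemma isFlow_walkFlow (hHG : H ≤ G) (p : H.Walk a b) : IsFlow G (walkFlow p) :=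
  ⟨walkFlow_antisymm p, fun _ _ hxy => walkFlow_eq_zero_of_not_adj p fun h => hxy (hHG h)⟩

lemma divg_walkFlow [DecidableEq V] [G.LocallyFinite] (hHG : H ≤ G) (p : H.Walk a b) :
    divg G (walkFlow p) = Pi.single a 1 - Pi.single b 1 := by
  induction p with
  | nil => ext; simp [divg, walkFlow]
  | @cons a c b h p ih =>
    ext x
    have hac : G.Adj a c := hHG h
    have hout : (∑ y ∈ G.neighborFinset x, if a = x ∧ c = y then (1 : ℝ) else 0) =
        (Pi.single a 1 : V → ℝ) x := by
      rw [Pi.single_apply]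
      split_ifs with hx
      · subst hx; simp [hac]
      · simp [Ne.symm hx]
    have hin : (∑ y ∈ G.neighborFinset x, if a = y ∧ c = x then (1 : ℝ) else 0) =
        (Pi.single c 1 : V → ℝ) x := by
      rw [Pi.single_apply]
      split_ifs with hx
      · subst hx; simp [hac.symm]
      · simp [Ne.symm hx]
    have hp := congrFun ih x
    simp only [divg, Pi.sub_apply] at hp ⊢
    simp only [walkFlow_cons, sum_add_distrib, sum_sub_distrib, hp, hout, hin]
    ring

open Classical in
lemma walkFlow_eq_of_nodup {p : H.Walk a b} (hp : (p.darts.map Dart.toProd).Nodup) (x y : V) :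
    walkFlow p x y = (if (x, y) ∈ p.darts.map Dart.toProd then 1 else 0) -
      (if (y, x) ∈ p.darts.map Dart.toProd then 1 else 0) := by
  have hcount (z : V × V) : ((p.darts.map Dart.toProd).count z : ℝ) =
      if z ∈ p.darts.map Dart.toProd then 1 else 0 := by
    split_ifs with hz
    · simp [List.count_eq_one_of_mem hp hz]
    · simp [List.count_eq_zero.2 hz]
  rw [walkFlow, hcount, hcount]

end WalkFlow

namespace SimpleGraph

variable {G F T : SimpleGraph V} {u v x y : V}

lemma Walk.IsTrail.reachable_deleteEdges_of_mem_darts {p : G.Walk u v} (hp : p.IsTrail)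
    (hxy : G.Adj x y) (hd : ⟨(x, y), hxy⟩ ∈ p.darts) :
    (G.deleteEdges {s(x, y)}).Reachable u x ∧ (G.deleteEdges {s(x, y)}).Reachable y v := by
  obtain ⟨q, r, rfl⟩ := (Walk.isSubwalk_toWalk_iff_mem_darts p hxy).2 hd
  have hnodup := hp.edges_nodup
  simp only [Walk.edges_append, Adj.edges_toWalk, List.nodup_append, List.mem_append,
    List.mem_singleton] at hnodup
  exact ⟨reachable_deleteEdges_iff_exists_walk.2 ⟨q, fun h => hnodup.1.2.2 _ h _ rfl rfl⟩,
    reachable_deleteEdges_iff_exists_walk.2 ⟨r, fun h => hnodup.2.2 _ (.inr rfl) _ h rfl⟩⟩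

lemma Walk.IsTrail.mem_darts_iff_of_isBridge {p : G.Walk u v} (hp : p.IsTrail)
    (hxy : G.Adj x y) (hb : G.IsBridge s(x, y)) :
    ⟨(x, y), hxy⟩ ∈ p.darts ↔
      (G.deleteEdges {s(x, y)}).Reachable u x ∧ (G.deleteEdges {s(x, y)}).Reachable v y := by
  refine ⟨fun hd => (hp.reachable_deleteEdges_of_mem_darts hxy hd).imp_right .symm,
    fun ⟨hux, hvy⟩ => ?_⟩
  have hnxy : ¬(G.deleteEdges {s(x, y)}).Reachable x y := isBridge_iff.1 hb
  have he : s(x, y) ∈ p.edges := by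
    by_contra he
    exact hnxy (hux.symm.trans ((reachable_deleteEdges_iff_exists_walk.2 ⟨p, he⟩).trans hvy))
  rcases (Walk.isSubwalk_toWalk_iff_mem_edges hxy).2 he with h | h
  · exact (Walk.isSubwalk_toWalk_iff_mem_darts p hxy).1 h
  · have huy := (hp.reachable_deleteEdges_of_mem_darts hxy.symm
      ((Walk.isSubwalk_toWalk_iff_mem_darts p hxy.symm).1 h)).1
    rw [Sym2.eq_swap] at huy
    exact (hnxy (hux.symm.trans huy)).elim

lemma Connected.reachable_deleteEdges_or (hG : G.Connected) (x y w : V) :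
    (G.deleteEdges {s(x, y)}).Reachable x w ∨ (G.deleteEdges {s(x, y)}).Reachable y w := by
  set H := G.deleteEdges {s(x, y)}
  suffices ∀ {a b} (p : G.Walk a b),
      H.Reachable x a ∨ H.Reachable y a → H.Reachable x b ∨ H.Reachable y b from
    this (hG.preconnected x w).some (.inl .rfl)
  intro a b p
  induction p with
  | nil => exact id
  | @cons a c b hac p ih =>
    refine fun ha => ih ?_
    by_cases he : s(a, c) = s(x, y)
    · rcases Sym2.eq_iff.1 he with ⟨rfl, rfl⟩ | ⟨rfl, rfl⟩
      exacts [.inr .rfl, .inl .rfl]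
    · have hH : H.Adj a c := by simp [H, hac, he]
      exact ha.imp (·.trans hH.reachable) (·.trans hH.reachable)

def IsSeparatingDart (T : SimpleGraph V) (u v x y : V) : Prop :=
  T.Adj x y ∧ (T.deleteEdges {s(x, y)}).Reachable u x ∧ (T.deleteEdges {s(x, y)}).Reachable v y

/-- `F` is a spanning forest with exactly two trees, one containing `u` and the other `v`. -/
def IsSeparatingForest (F : SimpleGraph V) (u v : V) : Prop :=
  F.IsAcyclic ∧ ¬F.Reachable u v ∧ ∀ w, F.Reachable u w ∨ F.Reachable v w

lemma isSeparatingDart_self_iff : T.IsSeparatingDart u v u v ↔ T.Adj u v :=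
  ⟨And.left, fun h => ⟨h, .rfl, .rfl⟩⟩

lemma IsSeparatingDart.not_swap (hT : T.IsAcyclic) (h : T.IsSeparatingDart u v x y) :
    ¬T.IsSeparatingDart u v y x := by
  rintro ⟨-, huy, -⟩
  obtain ⟨hxy, hux, -⟩ := h
  rw [Sym2.eq_swap] at huy
  exact isBridge_iff.1 (isAcyclic_iff_forall_adj_isBridge.1 hT hxy) (hux.symm.trans huy)

lemma IsTree.isSeparatingForest_deleteEdges (hT : T.IsTree) (h : T.IsSeparatingDart u v x y) :
    (T.deleteEdges {s(x, y)}).IsSeparatingForest u v := by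
  obtain ⟨hxy, hux, hvy⟩ := h
  have hnxy := isBridge_iff.1 (isAcyclic_iff_forall_adj_isBridge.1 hT.isAcyclic hxy)
  refine ⟨hT.isAcyclic.anti (deleteEdges_le _), fun huv => hnxy ?_, fun w => ?_⟩
  · exact hux.symm.trans (huv.trans hvy)
  · exact (hT.connected.reachable_deleteEdges_or x y w).imp hux.trans hvy.trans

lemma IsSeparatingForest.reachable_right_iff (hF : F.IsSeparatingForest u v) (w : V) :
    F.Reachable v w ↔ ¬F.Reachable u w :=
  ⟨fun hv hu => hF.2.1 (hu.trans hv.symm), (hF.2.2 w).resolve_left⟩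

lemma IsSeparatingForest.not_reachable (hF : F.IsSeparatingForest u v) (hux : F.Reachable u x)
    (hvy : F.Reachable v y) : ¬F.Reachable x y :=
  fun hxy => hF.2.1 (hux.trans (hxy.trans hvy.symm))

lemma deleteEdges_sup_edge (h : ¬F.Adj x y) : (F ⊔ edge x y).deleteEdges {s(x, y)} = F := by
  simp [deleteEdges_sup, h]

lemma IsSeparatingForest.isTree_sup_edge (hF : F.IsSeparatingForest u v) (hux : F.Reachable u x)
    (hvy : F.Reachable v y) : (F ⊔ edge x y).IsTree := by
  have hnxy := hF.not_reachable hux hvy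
  have hxy : (F ⊔ edge x y).Adj x y :=
    .inr ((edge_adj ..).2 ⟨.inl ⟨rfl, rfl⟩, fun h => hnxy (h ▸ .rfl)⟩)
  refine ⟨(connected_iff_exists_forall_reachable _).2 ⟨u, fun w => ?_⟩,
    hF.1.sup_edge_of_not_reachable hnxy⟩
  refine (hF.2.2 w).elim (·.mono le_sup_left) fun hvw => ?_
  exact ((hux.mono le_sup_left).trans hxy.reachable).trans ((hvy.symm.trans hvw).mono le_sup_left)

lemma IsSeparatingForest.isSeparatingDart_sup_edge (hF : F.IsSeparatingForest u v)
    (hux : F.Reachable u x) (hvy : F.Reachable v y) :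
    (F ⊔ edge x y).IsSeparatingDart u v x y := by
  have hnxy := hF.not_reachable hux hvy
  rw [IsSeparatingDart, deleteEdges_sup_edge fun h => hnxy h.reachable]
  exact ⟨.inr ((edge_adj ..).2 ⟨.inl ⟨rfl, rfl⟩, fun h => hnxy (h ▸ .rfl)⟩), hux, hvy⟩

noncomputable def treePath (hT : T.IsTree) (u v : V) : T.Walk u v :=
  (hT.existsUnique_path u v).exists.choose

lemma isPath_treePath (hT : T.IsTree) (u v : V) : (treePath hT u v).IsPath :=
  (hT.existsUnique_path u v).exists.choose_spec

lemma IsTree.mem_map_darts_treePath_iff (hT : T.IsTree) :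
    (x, y) ∈ (treePath hT u v).darts.map Dart.toProd ↔ T.IsSeparatingDart u v x y := by
  have hp := (isPath_treePath hT u v).isTrail
  have hb {x y : V} (h : T.Adj x y) := isAcyclic_iff_forall_adj_isBridge.1 hT.isAcyclic h
  simp only [List.mem_map]
  constructor
  · rintro ⟨⟨⟨x', y'⟩, h⟩, hd, he⟩
    obtain ⟨rfl, rfl⟩ := Prod.ext_iff.1 he
    exact ⟨h, (hp.mem_darts_iff_of_isBridge h (hb h)).1 hd⟩
  · rintro ⟨h, hr⟩
    exact ⟨_, (hp.mem_darts_iff_of_isBridge h (hb h)).2 hr, rfl⟩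

section Finite

variable [Fintype V]

open Classical in
noncomputable def spanningTrees (G : SimpleGraph V) : Finset (SimpleGraph V) :=
  {T | T ≤ G ∧ T.IsTree}

open Classical in
noncomputable def separatingForests (G : SimpleGraph V) (u v : V) : Finset (SimpleGraph V) :=
  {F | F ≤ G ∧ F.IsSeparatingForest u v}

lemma mem_spanningTrees : T ∈ G.spanningTrees ↔ T ≤ G ∧ T.IsTree := by
  simp [spanningTrees]

lemma mem_separatingForests : F ∈ G.separatingForests u v ↔ F ≤ G ∧ F.IsSeparatingForest u v := by
  simp [separatingForests]

lemma Connected.spanningTrees_nonempty (hG : G.Connected) : G.spanningTrees.Nonempty :=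
  let ⟨T, hTG, hT⟩ := hG.exists_isTree_le
  ⟨T, mem_spanningTrees.2 ⟨hTG, hT⟩⟩

open Classical in
lemma card_filter_isSeparatingDart (hxy : G.Adj x y) :
    #{T ∈ G.spanningTrees | T.IsSeparatingDart u v x y} =
      #{F ∈ G.separatingForests u v | F.Reachable u x ∧ F.Reachable v y} := by
  refine card_nbij' (·.deleteEdges {s(x, y)}) (· ⊔ edge x y) ?_ ?_ ?_ ?_
  · intro T hT
    simp only [coe_filter, mem_spanningTrees, Set.mem_ofPred_eq, mem_separatingForests] at hT ⊢
    obtain ⟨⟨hTG, hT⟩, hsep⟩ := hT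
    exact ⟨⟨(deleteEdges_le _).trans hTG, hT.isSeparatingForest_deleteEdges hsep⟩, hsep.2⟩
  · intro F hF
    simp only [coe_filter, mem_spanningTrees, Set.mem_ofPred_eq, mem_separatingForests] at hF ⊢
    obtain ⟨⟨hFG, hF⟩, hux, hvy⟩ := hF
    exact ⟨⟨sup_le hFG ((edge_le_iff _).2 (.inr hxy)), hF.isTree_sup_edge hux hvy⟩,
      hF.isSeparatingDart_sup_edge hux hvy⟩
  · intro T hT
    simp only [coe_filter, Set.mem_ofPred_eq] at hT
    exact sdiff_sup_cancel ((edge_le_iff _).2 (.inr hT.2.1))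
  · intro F hF
    simp only [coe_filter, mem_separatingForests, Set.mem_ofPred_eq] at hF
    obtain ⟨⟨-, hF⟩, hux, hvy⟩ := hF
    exact deleteEdges_sup_edge fun h => hF.not_reachable hux hvy h.reachable

end Finite

end SimpleGraph

section TreeFlow

variable {G T : SimpleGraph V} {u v x y : V}

open Classical in
noncomputable def treeFlow (u v : V) (T : SimpleGraph V) : V → V → ℝ :=
  if hT : T.IsTree then walkFlow (treePath hT u v) else 0

lemma isFlow_treeFlow (hTG : T ≤ G) (u v : V) : IsFlow G (treeFlow u v T) := by
  unfold treeFlow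
  split_ifs
  exacts [isFlow_walkFlow hTG _, (flowSubmodule G).zero_mem]

lemma divg_treeFlow [DecidableEq V] [G.LocallyFinite] (hTG : T ≤ G) (hT : T.IsTree) :
    divg G (treeFlow u v T) = Pi.single u 1 - Pi.single v 1 := by
  rw [treeFlow, dif_pos hT, divg_walkFlow hTG]

open Classical in
lemma treeFlow_apply (hT : T.IsTree) (x y : V) :
    treeFlow u v T x y = (if T.IsSeparatingDart u v x y then 1 else 0) -
      (if T.IsSeparatingDart u v y x then 1 else 0) := by
  have hnodup := (Walk.darts_nodup_of_support_nodup (isPath_treePath hT u v).support_nodup).map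
    Dart.toProd_injective
  simp only [treeFlow, dif_pos hT, walkFlow_eq_of_nodup hnodup, hT.mem_map_darts_treePath_iff]

open Classical in
lemma treeFlow_self (hT : T.IsTree) : treeFlow u v T u v = if T.Adj u v then 1 else 0 := by
  rw [treeFlow_apply hT]
  by_cases huv : T.Adj u v
  · have hsep := isSeparatingDart_self_iff.2 huv
    simp [hsep, hsep.not_swap hT.isAcyclic, huv]
  · have hvu : ¬T.Adj v u := fun h => huv h.symm
    simp [IsSeparatingDart, huv, hvu]

variable [Fintype V]

open Classical in
lemma sum_treeFlow (hxy : G.Adj x y) :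
    ∑ T ∈ G.spanningTrees, treeFlow u v T x y =
      (#{F ∈ G.separatingForests u v | F.Reachable u x} : ℝ) -
        #{F ∈ G.separatingForests u v | F.Reachable u y} := by
  let Q (w : V) := {F ∈ G.separatingForests u v | F.Reachable u w}
  have hsplit (x y : V) :
      {F ∈ G.separatingForests u v | F.Reachable u x ∧ F.Reachable v y} = Q x \ Q y := by
    ext F
    simp only [Q, mem_filter, mem_sdiff, mem_separatingForests]
    constructor
    · rintro ⟨hF, hux, hvy⟩
      exact ⟨⟨hF, hux⟩, fun h => (hF.2.reachable_right_iff y).1 hvy h.2⟩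
    · rintro ⟨⟨hF, hux⟩, huy⟩
      exact ⟨hF, hux, (hF.2.reachable_right_iff y).2 fun h => huy ⟨hF, h⟩⟩
  rw [sum_congr rfl fun T hT => treeFlow_apply (mem_spanningTrees.1 hT).2 x y, sum_sub_distrib,
    sum_boole, sum_boole, card_filter_isSeparatingDart hxy, card_filter_isSeparatingDart hxy.symm,
    hsplit, hsplit]
  exact Finset.cast_card_sdiff_sub_cast_card_sdiff (Q x) (Q y)

open Classical in
noncomputable def spanningTreeFlow (G : SimpleGraph V) (u v : V) : V → V → ℝ :=
  (#G.spanningTrees : ℝ)⁻¹ • ∑ T ∈ G.spanningTrees, treeFlow u v T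

open Classical in
noncomputable def forestPotential (G : SimpleGraph V) (u v w : V) : ℝ :=
  (#G.spanningTrees : ℝ)⁻¹ * #{F ∈ G.separatingForests u v | F.Reachable u w}

lemma isFlow_spanningTreeFlow : IsFlow G (spanningTreeFlow G u v) :=
  (flowSubmodule G).smul_mem _ (sum_mem fun _ hT => isFlow_treeFlow (mem_spanningTrees.1 hT).1 u v)

lemma divg_spanningTreeFlow [G.LocallyFinite] (hG : G.Connected) (huv : u ≠ v) :
    divg G (spanningTreeFlow G u v) = pointSource u v := by
  classical
  have hN : (#G.spanningTrees : ℝ) ≠ 0 := by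
    exact_mod_cast hG.spanningTrees_nonempty.card_pos.ne'
  rw [spanningTreeFlow, divg_smul, divg_sum, sum_congr rfl fun T hT =>
    divg_treeFlow (mem_spanningTrees.1 hT).1 (mem_spanningTrees.1 hT).2, sum_const,
    ← Nat.cast_smul_eq_nsmul ℝ, inv_smul_smul₀ hN, pointSource_eq_single_sub_single huv]

lemma spanningTreeFlow_eq_forestPotential_sub (hxy : G.Adj x y) :
    spanningTreeFlow G u v x y = forestPotential G u v x - forestPotential G u v y := by
  simp only [spanningTreeFlow, Pi.smul_apply, Finset.sum_apply, smul_eq_mul, sum_treeFlow hxy,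
    forestPotential]
  ring

open Classical in
lemma spanningTreeFlow_self :
    spanningTreeFlow G u v u v = (#G.spanningTrees : ℝ)⁻¹ * #{T ∈ G.spanningTrees | T.Adj u v} := by
  simp only [spanningTreeFlow, Pi.smul_apply, Finset.sum_apply, smul_eq_mul,
    sum_congr rfl fun T hT => treeFlow_self (mem_spanningTrees.1 hT).2, sum_boole]

end TreeFlow

/-- **Kirchhoff's rule**: the effective resistance across an edge `{u,v}` of a finite
connected graph of unit resistors equals the probability that a uniformly random spanning
tree of `G` contains the edge `{u,v}`. -/
theorem kirchhoff_rule (G : SimpleGraph V) [Fintype V]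
    (hconn : G.Connected) (u v : V) (huv : G.Adj u v) :
    effRes G u v =
      ({H : SimpleGraph V | H ≤ G ∧ H.IsTree ∧ H.Adj u v}.ncard : ℝ) /
        ({H : SimpleGraph V | H ≤ G ∧ H.IsTree}.ncard : ℝ) := by
  classical
  have htrees_adj : {H : SimpleGraph V | H ≤ G ∧ H.IsTree ∧ H.Adj u v} =
      ↑({T ∈ G.spanningTrees | T.Adj u v}) := by
    ext; simp [mem_spanningTrees, and_assoc]
  have htrees : {H : SimpleGraph V | H ≤ G ∧ H.IsTree} = ↑G.spanningTrees := by
    ext; simp [mem_spanningTrees]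
  rw [effRes_eq_of_potential huv.ne isFlow_spanningTreeFlow (divg_spanningTreeFlow hconn huv.ne)
    fun x y => spanningTreeFlow_eq_forestPotential_sub,
    ← spanningTreeFlow_eq_forestPotential_sub huv, spanningTreeFlow_self, htrees_adj, htrees, Set.ncard_coe_finset, Set.ncard_coe_finset,
    inv_mul_eq_div]
end
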